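/- Give 𝕊 the localic topology. (a) For every positive natural number n and every supernatural number s with n ∣ s, the set (n) ∩ {x : x ∣ s} = {x ∈ 𝕊 : n ∣ x and x ∣ s} is locally closed. (b) Conversely, for every locally closed subset V ⊆ 𝕊 and every s ∈ V, there exists a positive natural number n with n ∣ s such that {x ∈ 𝕊 : n ∣ x and x ∣ s} ⊆ V. -/

import Mathlib

open Topology

/-- A supernatural number: a function from the set of primes to `ℕ∞ = ℕ ∪ {∞}`,
thought of as the formal product `∏ p ^ (s p)`. -/
def Supernatural : Type := Nat.Primes → ℕ∞

/-- Divisibility of supernatural numbers: `s ∣ t` iff `s p ≤ t p` for every prime `p`. -/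
instance : Dvd Supernatural := ⟨fun s t => ∀ p, s p ≤ t p⟩

/-- The supernatural number associated to a positive natural number,
given by its prime factorization. -/
def natToSuper (n : ℕ+) : Supernatural := fun p => ((n : ℕ).factorization p : ℕ∞)

/-- The localic topology on `𝕊`, generated by the open sets `(n) = {s : n ∣ s}`
for `n` a positive natural number. -/
def localicTopology : TopologicalSpace Supernatural :=
  .generateFrom {U | ∃ n : ℕ+, U = {s | natToSuper n ∣ s}}

attribute [instance] localicTopology


/-! Finite intersections of cones `(n)` are cones, `(n) ∩ (m) = (lcm n m)`, so every open set is a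
union of cones and in particular closed upwards under divisibility. The cones `(p ^ k)` with
`k > s p` cover the complement of `{x | x ∣ s}`, so that set is closed and `(n) ∩ {x | x ∣ s}` is
locally closed. Conversely, if `s ∈ U ∩ Z` with `U` open and `Z` closed, some cone `(n) ∋ s` lies
in `U`, and every divisor of `s` lies in `Z` because the open set `Zᶜ` is closed upwards and
misses `s`. -/

namespace Supernatural

theorem dvd_trans {a b c : Supernatural} (hab : a ∣ b) (hbc : b ∣ c) : a ∣ c :=
  fun p => (hab p).trans (hbc p)

theorem natToSuper_one_dvd (x : Supernatural) : natToSuper 1 ∣ x :=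
  fun p => by simp [natToSuper]

theorem natToSuper_lcm_dvd_iff (n m : ℕ+) (x : Supernatural) :
    natToSuper (PNat.lcm n m) ∣ x ↔ natToSuper n ∣ x ∧ natToSuper m ∣ x := by
  change (∀ p, _) ↔ (∀ p, _) ∧ (∀ p, _)
  simp only [natToSuper, PNat.lcm_coe, Nat.factorization_lcm n.ne_zero m.ne_zero,
    Finsupp.sup_apply, Nat.mono_cast.map_max, max_le_iff, forall_and]

theorem natToSuper_primePow_dvd_iff (p : Nat.Primes) (k : ℕ) (x : Supernatural) :
    natToSuper ⟨p ^ k, pow_pos p.2.pos k⟩ ∣ x ↔ (k : ℕ∞) ≤ x p := by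
  have hfac (q : Nat.Primes) :
      natToSuper ⟨p ^ k, pow_pos p.2.pos k⟩ q = if p = q then k else 0 := by
    simp [natToSuper, p.2.factorization_pow, Finsupp.single_apply, Nat.Primes.coe_nat_inj]
  refine ⟨fun h => by simpa [hfac] using h p, fun h q => ?_⟩
  rw [hfac]
  split_ifs with hq
  · exact hq ▸ h
  · exact zero_le

theorem isOpen_setOf_natToSuper_dvd (n : ℕ+) : IsOpen {x : Supernatural | natToSuper n ∣ x} :=
  .basic _ ⟨n, rfl⟩

theorem isClosed_setOf_dvd (s : Supernatural) : IsClosed {x : Supernatural | x ∣ s} := by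
  refine isOpen_compl_iff.mp <| isOpen_iff_forall_mem_open.mpr fun x hx => ?_
  obtain ⟨p, hp⟩ : ∃ p, s p < x p := by
    simpa only [not_forall, not_le] using show ¬∀ p, x p ≤ s p from hx
  obtain ⟨k, hk⟩ := ENat.ne_top_iff_exists.mp hp.ne_top
  have hcone (y : Supernatural) :
      natToSuper ⟨p ^ (k + 1), pow_pos p.2.pos _⟩ ∣ y ↔ s p < y p := by
    rw [natToSuper_primePow_dvd_iff, Nat.cast_add_one, ENat.natCast_add_one_le_iff, ← hk]
  refine ⟨_, fun y hy hys => ?_, isOpen_setOf_natToSuper_dvd _, (hcone x).mpr hp⟩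
  exact ((hcone y).mp hy).not_ge (hys p)

theorem exists_natToSuper_dvd_subset_of_isOpen {U : Set Supernatural} (hU : IsOpen U)
    {s : Supernatural} (hs : s ∈ U) :
    ∃ n : ℕ+, natToSuper n ∣ s ∧ {x | natToSuper n ∣ x} ⊆ U := by
  induction hU generalizing s with
  | basic V hV =>
    obtain ⟨n, rfl⟩ := hV
    exact ⟨n, hs, subset_rfl⟩
  | univ => exact ⟨1, natToSuper_one_dvd s, Set.subset_univ _⟩
  | inter V W _ _ ihV ihW =>
    obtain ⟨n, hns, hnV⟩ := ihV hs.1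
    obtain ⟨m, hms, hmW⟩ := ihW hs.2
    refine ⟨PNat.lcm n m, (natToSuper_lcm_dvd_iff n m s).mpr ⟨hns, hms⟩, fun x hx => ?_⟩
    obtain ⟨hnx, hmx⟩ := (natToSuper_lcm_dvd_iff n m x).mp hx
    exact ⟨hnV hnx, hmW hmx⟩
  | sUnion 𝒮 _ ih =>
    obtain ⟨V, hV, hsV⟩ := hs
    obtain ⟨n, hns, hnV⟩ := ih V hV hsV
    exact ⟨n, hns, hnV.trans (Set.subset_sUnion_of_mem hV)⟩

theorem mem_of_isOpen_of_dvd {U : Set Supernatural} (hU : IsOpen U) {x y : Supernatural}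
    (hx : x ∈ U) (hxy : x ∣ y) : y ∈ U := by
  obtain ⟨n, hnx, hnU⟩ := exists_natToSuper_dvd_subset_of_isOpen hU hx
  exact hnU (dvd_trans hnx hxy)

end Supernatural

theorem stmt2 :
    (∀ (n : ℕ+) (s : Supernatural), natToSuper n ∣ s →
      IsLocallyClosed {x | natToSuper n ∣ x ∧ x ∣ s}) ∧
    (∀ V : Set Supernatural, IsLocallyClosed V → ∀ s ∈ V,
      ∃ n : ℕ+, natToSuper n ∣ s ∧ {x | natToSuper n ∣ x ∧ x ∣ s} ⊆ V) := by
  refine ⟨fun n s _ => ⟨_, _, Supernatural.isOpen_setOf_natToSuper_dvd n,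
    Supernatural.isClosed_setOf_dvd s, rfl⟩, ?_⟩
  rintro V ⟨U, Z, hU, hZ, rfl⟩ s ⟨hsU, hsZ⟩
  obtain ⟨n, hns, hnU⟩ := Supernatural.exists_natToSuper_dvd_subset_of_isOpen hU hsU
  refine ⟨n, hns, fun x ⟨hnx, hxs⟩ => ⟨hnU hnx, ?_⟩⟩
  by_contra hxZ
  exact Supernatural.mem_of_isOpen_of_dvd hZ.isOpen_compl hxZ hxs hsZ
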